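/- For every integer n ≥ 0 and r ≥ 0: ∑_{k=0}^n [n+k choose k]_q [n-k choose r]_q q^{(r+1)k} = [2n+1 choose n+r+1]_q. -/
import Mathlib

noncomputable def qPoch (a q : ℂ) (n : ℕ) : ℂ := ∏ i ∈ Finset.range n, (1 - a * q ^ i)

noncomputable def qPochInf (a q : ℂ) : ℂ := ∏' i : ℕ, (1 - a * q ^ i)

noncomputable def qBinom (q : ℂ) (m k : ℕ) : ℂ :=
  if k ≤ m then qPoch q q m / (qPoch q q k * qPoch q q (m - k)) else 0

section Aux

variable {q : ℂ} (hq1 : ‖q‖ < 1)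

include hq1

lemma factor_ne_zero (i : ℕ) : (1 : ℂ) - q * q ^ i ≠ 0 := by
  intro h
  have h1 : (1 : ℂ) = q * q ^ i := by linear_combination h
  have hp : ‖q‖ ^ i ≤ 1 := pow_le_one₀ (norm_nonneg q) hq1.le
  have h2 : ‖q * q ^ i‖ < 1 := by
    rw [norm_mul, norm_pow]
    nlinarith [norm_nonneg q, pow_nonneg (norm_nonneg q) i]
  rw [← h1] at h2
  simp at h2

lemma qPoch_ne_zero (m : ℕ) : qPoch q q m ≠ 0 := by
  unfold qPoch
  exact Finset.prod_ne_zero_iff.mpr fun i _ => factor_ne_zero hq1 i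

omit hq1 in
lemma qPoch_succ (m : ℕ) : qPoch q q (m + 1) = qPoch q q m * (1 - q * q ^ m) :=
  Finset.prod_range_succ _ m

omit hq1 in
lemma qBinom_of_lt {m k : ℕ} (h : m < k) : qBinom q m k = 0 := if_neg (by omega)

lemma qBinom_self (m : ℕ) : qBinom q m m = 1 := by
  unfold qBinom
  rw [if_pos le_rfl, Nat.sub_self]
  show qPoch q q m / (qPoch q q m * qPoch q q 0) = 1
  have : qPoch q q 0 = 1 := Finset.prod_range_zero _
  rw [this, mul_one, div_self (qPoch_ne_zero hq1 m)]

lemma qBinom_zero' (m : ℕ) : qBinom q m 0 = 1 := by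
  unfold qBinom
  rw [if_pos (Nat.zero_le m), Nat.sub_zero]
  have : qPoch q q 0 = 1 := Finset.prod_range_zero _
  rw [this, one_mul, div_self (qPoch_ne_zero hq1 m)]

omit hq1 in
lemma qBinom_symm {m k : ℕ} (h : k ≤ m) : qBinom q m k = qBinom q m (m - k) := by
  unfold qBinom
  rw [if_pos h, if_pos (Nat.sub_le m k), Nat.sub_sub_self h, mul_comm]

lemma pascal (M c : ℕ) :
    qBinom q (M + 1) (c + 1) = q ^ (M - c) * qBinom q M c + qBinom q M (c + 1) := by
  rcases lt_trichotomy c M with hc | hc | hc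
  · -- c < M
    obtain ⟨d, rfl⟩ : ∃ d, M = c + d + 1 := ⟨M - c - 1, by omega⟩
    unfold qBinom
    rw [if_pos (by omega), if_pos (by omega), if_pos (by omega)]
    have e1 : c + d + 1 + 1 - (c + 1) = d + 1 := by omega
    have e2 : c + d + 1 - c = d + 1 := by omega
    have e3 : c + d + 1 - (c + 1) = d := by omega
    rw [e1, e2, e3]
    rw [qPoch_succ (m := c + d + 1), qPoch_succ (m := d), qPoch_succ (m := c)]
    have h1 := qPoch_ne_zero (q := q) hq1 c
    have h2 := qPoch_ne_zero (q := q) hq1 d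
    have h3 := qPoch_ne_zero (q := q) hq1 (c + d + 1)
    have h4 := factor_ne_zero (q := q) hq1 c
    have h5 := factor_ne_zero (q := q) hq1 d
    field_simp
    ring
  · -- c = M
    subst hc
    rw [qBinom_self hq1, qBinom_self hq1, qBinom_of_lt (by omega), Nat.sub_self]
    simp
  · -- M < c
    rw [qBinom_of_lt (by omega), qBinom_of_lt hc, qBinom_of_lt (by omega)]
    simp

lemma gen_identity (J : ℕ) : ∀ T c : ℕ, J + 1 ≤ c → c ≤ T →
    qBinom q T c = ∑ k ∈ Finset.range (T - J),
      qBinom q (J + k) J * qBinom q (T - J - 1 - k) (c - J - 1) * q ^ ((c - J) * k) := by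
  intro T
  induction T with
  | zero => intro c h1 h2; omega
  | succ T ih =>
    intro c h1 h2
    obtain ⟨b, rfl⟩ : ∃ b, c = b + 1 := ⟨c - 1, by omega⟩
    by_cases hdiag : b = T
    · -- diagonal case: qBinom q (T+1) (T+1) = 1
      rw [hdiag]
      rw [qBinom_self hq1]
      have hJ : J ≤ T := by omega
      rw [Finset.sum_eq_single_of_mem 0 (Finset.mem_range.mpr (by omega))]
      · have e1 : T + 1 - J - 1 - 0 = T - J := by omega
        have e2 : T + 1 - J - 1 = T - J := by omega
        rw [e1, e2, Nat.add_zero, qBinom_self hq1, qBinom_self hq1]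
        simp
      · intro k hk hk0
        have hk' : k < T + 1 - J := Finset.mem_range.mp hk
        have : qBinom q (T + 1 - J - 1 - k) (T + 1 - J - 1) = 0 :=
          qBinom_of_lt (by omega)
        rw [this]; ring
    · have hbT : b + 1 ≤ T := by omega
      by_cases hbase : b = J
      · -- base case c = J + 1
        rw [hbase]
        rw [pascal hq1 T J]
        rw [ih (J + 1) (by omega) (by omega)]
        have e0 : T + 1 - J = (T - J) + 1 := by omega
        rw [e0, Finset.sum_range_succ]
        have e3 : J + 1 - J - 1 = 0 := by omega
        have e4 : J + 1 - J = 1 := by omega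
        simp only [e3, e4, qBinom_zero' hq1, mul_one, one_mul, pow_one]
        have e1 : J + (T - J) = T := by omega
        rw [e1]
        ring
      · -- main case: J + 1 ≤ b
        have hJb : J + 1 ≤ b := by omega
        obtain ⟨s, rfl⟩ : ∃ s, b = J + s + 1 := ⟨b - J - 1, by omega⟩
        rw [pascal hq1 T (J + s + 1)]
        rw [ih (J + s + 1) (by omega) (by omega), ih (J + s + 1 + 1) (by omega) (by omega)]
        rw [Finset.mul_sum, ← Finset.sum_add_distrib]
        have e0 : T + 1 - J = (T - J) + 1 := by omega
        rw [e0, Finset.sum_range_succ]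
        have elast : qBinom q (T - J + 1 - 1 - (T - J)) (J + s + 1 + 1 - J - 1) = 0 := by
          apply qBinom_of_lt; omega
        rw [elast]
        rw [mul_zero, zero_mul, add_zero]
        apply Finset.sum_congr rfl
        intro k hk
        have hkr : k < T - J := Finset.mem_range.mp hk
        -- abbreviations
        have eA : T - J + 1 - 1 - k = (T - J - 1 - k) + 1 := by omega
        have eb1 : J + s + 1 - J - 1 = s := by omega
        have eb2 : J + s + 1 - J = s + 1 := by omega
        have eb3 : J + s + 1 + 1 - J - 1 = s + 1 := by omega
        have eb4 : J + s + 1 + 1 - J = s + 2 := by omega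
        rw [eA, eb1, eb2, eb3, eb4]
        rw [pascal hq1 (T - J - 1 - k) s]
        by_cases hk2 : k ≤ T - (J + s + 1)
        · have eexp : q ^ (T - (J + s + 1)) * q ^ ((s + 1) * k)
              = q ^ (T - J - 1 - k - s) * q ^ ((s + 2) * k) := by
            rw [← pow_add, ← pow_add]
            congr 1
            have h1 : (s + 2) * k = (s + 1) * k + k := by ring
            have h2 : T - J - 1 - k - s = T - (J + s + 1) - k := by omega
            rw [h1, h2]
            omega
          calc q ^ (T - (J + s + 1)) *
                (qBinom q (J + k) J * qBinom q (T - J - 1 - k) s * q ^ ((s + 1) * k)) +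
              qBinom q (J + k) J * qBinom q (T - J - 1 - k) (s + 1) * q ^ ((s + 2) * k)
              = qBinom q (J + k) J * ((q ^ (T - (J + s + 1)) * q ^ ((s + 1) * k)) *
                  qBinom q (T - J - 1 - k) s) +
                qBinom q (J + k) J * qBinom q (T - J - 1 - k) (s + 1) * q ^ ((s + 2) * k) := by
                ring
            _ = qBinom q (J + k) J *
                  (q ^ (T - J - 1 - k - s) * qBinom q (T - J - 1 - k) s +
                    qBinom q (T - J - 1 - k) (s + 1)) * q ^ ((s + 2) * k) := by
                rw [eexp]; ring
        · have hzero : qBinom q (T - J - 1 - k) s = 0 := qBinom_of_lt (by omega)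
          rw [hzero]
          ring

end Aux

theorem stmt_12 (q : ℂ) (hq0 : 0 < ‖q‖) (hq1 : ‖q‖ < 1) (n r : ℕ) :
    ∑ k ∈ Finset.range (n + 1), qBinom q (n + k) k * qBinom q (n - k) r * q ^ ((r + 1) * k) =
    qBinom q (2 * n + 1) (n + r + 1) := by
  by_cases hr : r ≤ n
  · have hG := gen_identity hq1 n (2 * n + 1) (n + r + 1) (by omega) (by omega)
    have e0 : 2 * n + 1 - n = n + 1 := by omega
    rw [e0] at hG
    rw [hG]
    apply Finset.sum_congr rfl
    intro k hk
    have hkn : k < n + 1 := Finset.mem_range.mp hk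
    have e1 : n + 1 - 1 - k = n - k := by omega
    have e2 : n + r + 1 - n - 1 = r := by omega
    have e3 : n + r + 1 - n = r + 1 := by omega
    rw [e1, e2, e3]
    congr 1
    congr 1
    rw [qBinom_symm (by omega : k ≤ n + k)]
    congr 1
    omega
  · rw [qBinom_of_lt (by omega)]
    apply Finset.sum_eq_zero
    intro k hk
    rw [qBinom_of_lt (q := q) (by omega : n - k < r)]
    ring
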